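/- The left Kan extension along j : Δ_inert → Δ of the terminal presheaf 1 : Δ_inert^op → Set is isomorphic to the nerve of Bℕ, the one-object category with endomorphism monoid (ℕ,+); in particular j_!(1)_k ≅ ℕ^k, via sending an active map α : [k] → [n] to the tuple of successive differences. -/

import Mathlib

/-! Preliminaries: the active-inert factorization system on the simplex
category, the inert subcategory `Δ_inert`, the one-object category `Bℕ`,
twisted arrow categories, and the explicit free decomposition space formula,
following Hackney–Kock, "Free decomposition spaces". -/

open CategoryTheory SimplexCategory

namespace FreeDecompPaper

/-- A map in the simplex category is *active* if it preserves endpoints: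
`f 0 = 0` and `f (last) = last`. -/
def IsActive {x y : SimplexCategory} (f : x ⟶ y) : Prop :=
  f.toOrderHom 0 = 0 ∧ f.toOrderHom (Fin.last x.len) = Fin.last y.len

/-- A map in the simplex category is *inert* (distance-preserving) if
`f (i+1) = f i + 1` for all `i`. -/
def IsInert {x y : SimplexCategory} (f : x ⟶ y) : Prop :=
  ∀ i : Fin x.len, (f.toOrderHom i.succ : ℕ) = (f.toOrderHom i.castSucc : ℕ) + 1

lemma isInert_id (x : SimplexCategory) : IsInert (𝟙 x) := by intro i; simp

lemma isInert_from_zero {n : ℕ} (f : mk 0 ⟶ mk n) : IsInert f := fun i => i.elim0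

lemma isInert_comp {x y z : SimplexCategory} {f : x ⟶ y} {g : y ⟶ z}
    (hf : IsInert f) (hg : IsInert g) : IsInert (f ≫ g) := by
  intro i
  have key : ∀ a b : Fin (y.len + 1), (b : ℕ) = (a : ℕ) + 1 →
      (g.toOrderHom b : ℕ) = (g.toOrderHom a : ℕ) + 1 := by
    intro a b hab
    have ha : (a : ℕ) < y.len := by have := b.isLt; omega
    have e1 : (⟨(a : ℕ), ha⟩ : Fin y.len).castSucc = a := by ext; simp
    have e2 : (⟨(a : ℕ), ha⟩ : Fin y.len).succ = b := by ext; simp; omega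
    have := hg ⟨(a : ℕ), ha⟩
    rw [e1, e2] at this
    exact this
  simpa using key _ _ (hf i)

lemma isActive_id (x : SimplexCategory) : IsActive (𝟙 x) := by
  constructor <;> simp

lemma isActive_comp {x y z : SimplexCategory} {f : x ⟶ y} {g : y ⟶ z}
    (hf : IsActive f) (hg : IsActive g) : IsActive (f ≫ g) := by
  constructor
  · show g.toOrderHom (f.toOrderHom 0) = 0
    rw [hf.1, hg.1]
  · show g.toOrderHom (f.toOrderHom (Fin.last x.len)) = Fin.last z.len
    rw [hf.2, hg.2]

/-- The inert map `ρᵢ : [1] → [k]` with image `{i, i+1}` (0-indexed vertices;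
in the 1-indexed labelling of the paper its image is `{i-1, i}`). -/
def rho (k : ℕ) (i : Fin k) : mk 1 ⟶ mk k :=
  mkHom ⟨fun j => ⟨(i : ℕ) + (j : ℕ), by have := i.isLt; have := j.isLt; omega⟩,
    fun a b h => by
      simp only [Fin.mk_le_mk]
      have : (a : ℕ) ≤ (b : ℕ) := h
      omega⟩

/-- The vertex map `[0] → [k]` picking out the vertex `j`. -/
def vtx (k : ℕ) (j : Fin (k + 1)) : mk 0 ⟶ mk k :=
  mkHom ⟨fun _ => j, fun _ _ _ => le_refl _⟩

/-- The unique active map `[1] → [k]`. -/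
def mu (k : ℕ) : mk 1 ⟶ mk k :=
  mkHom ⟨fun j => ⟨(j : ℕ) * k, by
      have hj : (j : ℕ) ≤ 1 := by have := j.isLt; omega
      have : (j : ℕ) * k ≤ 1 * k := Nat.mul_le_mul_right k hj
      omega⟩,
    fun a b h => by
      simp only [Fin.mk_le_mk]
      exact Nat.mul_le_mul_right k h⟩

lemma isActive_mu (k : ℕ) : IsActive (mu k) := by
  constructor
  · ext
    show ((0 : Fin 2) : ℕ) * k = ((0 : Fin (k+1)) : ℕ)
    simp
  · ext
    show ((Fin.last 1 : Fin 2) : ℕ) * k = ((Fin.last k : Fin (k+1)) : ℕ)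
    simp [Fin.last]

/-- Iterated bottom coface `(d⊥)^a : [m] → [m+a]`, where `d⊥ = δ 0 : i ↦ i+1`. -/
def dBotPow (m : ℕ) : (a : ℕ) → (mk m ⟶ mk (m + a))
  | 0 => 𝟙 _
  | a + 1 => dBotPow m a ≫ δ (0 : Fin (m + a + 2))

/-- Iterated top coface `(d⊤)^b : [m] → [m+b]`, where `d⊤ = δ (last) : i ↦ i`. -/
def dTopPow (m : ℕ) : (b : ℕ) → (mk m ⟶ mk (m + b))
  | 0 => 𝟙 _
  | b + 1 => dTopPow m b ≫ δ (Fin.last (m + b + 1))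

lemma isInert_dBot (m : ℕ) : IsInert (δ (0 : Fin (m + 2)) : mk m ⟶ mk (m + 1)) := by
  intro i
  show ((0 : Fin (m+2)).succAbove i.succ : ℕ) = ((0 : Fin (m+2)).succAbove i.castSucc : ℕ) + 1
  rw [Fin.succAbove_of_le_castSucc _ _ (by simp [Fin.le_def]),
    Fin.succAbove_of_le_castSucc _ _ (by simp [Fin.le_def])]
  simp

lemma isInert_dTop (m : ℕ) : IsInert (δ (Fin.last (m + 1)) : mk m ⟶ mk (m + 1)) := by
  intro i
  show ((Fin.last (m+1)).succAbove i.succ : ℕ) = ((Fin.last (m+1)).succAbove i.castSucc : ℕ) + 1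
  have hi : (i : ℕ) < m := by have := i.isLt; simpa [SimplexCategory.len_mk] using this
  rw [Fin.succAbove_of_castSucc_lt _ _ (by
      simp only [Fin.lt_def, Fin.coe_castSucc, Fin.val_succ, Fin.val_last]; omega),
    Fin.succAbove_of_castSucc_lt _ _ (by
      simp only [Fin.lt_def, Fin.coe_castSucc, Fin.val_last]; omega)]
  simp

lemma isInert_dBotPow (m a : ℕ) : IsInert (dBotPow m a) := by
  induction a with
  | zero => exact isInert_id _
  | succ a ih => exact isInert_comp ih (isInert_dBot _)

lemma isInert_dTopPow (m b : ℕ) : IsInert (dTopPow m b) := by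
  induction b with
  | zero => exact isInert_id _
  | succ b ih => exact isInert_comp ih (isInert_dTop _)

/-- The subcategory `Δ_inert` of the simplex category: objects are natural
numbers `n` (standing for the ordinal `[n]`), and morphisms `m ⟶ n` are the
inert maps `[m] → [n]`. -/
structure InertCat where
  n : ℕ

instance : Category InertCat where
  Hom x y := {f : mk x.n ⟶ mk y.n // IsInert f}
  id x := ⟨𝟙 _, isInert_id _⟩
  comp f g := ⟨f.1 ≫ g.1, isInert_comp f.2 g.2⟩
  id_comp f := by apply Subtype.ext; simp
  comp_id f := by apply Subtype.ext; simp
  assoc f g h := by apply Subtype.ext; simp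

/-- The inclusion `j : Δ_inert → Δ`. -/
def jF : InertCat ⥤ SimplexCategory where
  obj x := mk x.n
  map f := f.1
  map_id _ := rfl
  map_comp _ _ := rfl

/-- The top vertex `[0] → [m]` as a morphism of `Δ_inert`. -/
def topV (m : ℕ) : (⟨0⟩ : InertCat) ⟶ ⟨m⟩ :=
  ⟨vtx m (Fin.last m), isInert_from_zero _⟩

/-- The bottom vertex `[0] → [m]` as a morphism of `Δ_inert`. -/
def botV (m : ℕ) : (⟨0⟩ : InertCat) ⟶ ⟨m⟩ :=
  ⟨vtx m 0, isInert_from_zero _⟩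

/-- The outer coface `d⊥ : [0] → [1]` (omitting `0`) as a morphism of `Δ_inert`. -/
def dBotI : (⟨0⟩ : InertCat) ⟶ ⟨1⟩ := ⟨δ (0 : Fin 2), isInert_from_zero _⟩

/-- The outer coface `d⊤ : [0] → [1]` (omitting the top) as a morphism of `Δ_inert`. -/
def dTopI : (⟨0⟩ : InertCat) ⟶ ⟨1⟩ := ⟨δ (1 : Fin 2), isInert_from_zero _⟩

/-- The category with objects `ℕ` and morphisms `m ⟶ n` the pairs `(a,b)`
with `a + m + b = n`, composed by componentwise addition. -/
structure NPairCat where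
  n : ℕ

instance : Category NPairCat where
  Hom x y := {p : ℕ × ℕ // p.1 + x.n + p.2 = y.n}
  id x := ⟨(0, 0), by omega⟩
  comp f g := ⟨(f.1.1 + g.1.1, f.1.2 + g.1.2), by have h1 := f.2; have h2 := g.2; omega⟩
  id_comp f := by apply Subtype.ext; obtain ⟨⟨a, b⟩, h⟩ := f; simp
  comp_id f := by apply Subtype.ext; obtain ⟨⟨a, b⟩, h⟩ := f; simp
  assoc f g h := by apply Subtype.ext; simp; omega

/-- The one-object category `Bℕ` with endomorphism monoid `(ℕ,+)`. -/
abbrev BN := SingleObj (Multiplicative ℕ)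

/-- The twisted arrow category of a category `C`: objects are arrows of `C`,
and a morphism from `f'` to `f` is a pair `(a, b)` with `f = a ≫ f' ≫ b`,
i.e. `f = b ∘ f' ∘ a`. -/
def Tw (C : Type u) [Category.{v} C] := Σ (x : C) (y : C), x ⟶ y

instance (C : Type u) [Category.{v} C] : Category (Tw C) where
  Hom f g := {p : (g.1 ⟶ f.1) × (f.2.1 ⟶ g.2.1) // g.2.2 = p.1 ≫ f.2.2 ≫ p.2}
  id f := ⟨(𝟙 _, 𝟙 _), by simp⟩
  comp u v := ⟨(v.1.1 ≫ u.1.1, u.1.2 ≫ v.1.2), by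
    have hu := u.2
    have hv := v.2
    simp only []
    simp only [hv, hu, Category.assoc]⟩
  id_comp u := by apply Subtype.ext; simp
  comp_id u := by apply Subtype.ext; simp
  assoc u v w := by apply Subtype.ext; simp

/-- Extract the pair of natural numbers underlying a morphism in `Tw Bℕ`. -/
def twBNPair {f g : Tw BN} (u : f ⟶ g) : ℕ × ℕ :=
  (Multiplicative.toAdd (show Multiplicative ℕ from u.1.1),
   Multiplicative.toAdd (show Multiplicative ℕ from u.1.2))

/-- Extract the natural number underlying an object of `Tw Bℕ`. -/
def twBNObj (f : Tw BN) : ℕ :=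
  Multiplicative.toAdd (show Multiplicative ℕ from f.2.2)

/-- The type of `k`-simplices of the free simplicial set on `A : Δ_inert^op → Set`:
the explicit formula `X_k = ∑_{α : [k] ↠ [n] active} A_n`. -/
def FD (A : InertCat ᵒᵖ ⥤ Type) (k : ℕ) : Type :=
  Σ n : ℕ, {α : mk k ⟶ mk n // IsActive α} × A.obj (Opposite.op ⟨n⟩)

/-- The action of an active map `g : [k'] → [k]` on the free simplicial set,
given by precomposition on the indexing active maps and the identity on summands. -/
def FDmap (A : InertCat ᵒᵖ ⥤ Type) {k' k : ℕ} (g : mk k' ⟶ mk k) (hg : IsActive g) :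
    FD A k → FD A k' :=
  fun x => ⟨x.1, ⟨g ≫ x.2.1.1, isActive_comp hg x.2.1.2⟩, x.2.2⟩

/-- The map of free simplicial sets induced by a natural transformation. -/
def FDmapNat {A' A : InertCat ᵒᵖ ⥤ Type} (η : A' ⟶ A) (k : ℕ) : FD A' k → FD A k :=
  fun x => ⟨x.1, x.2.1, η.app _ x.2.2⟩

/-- The tuple of successive differences of a map `α : [k] → [n]`. -/
def diff {k n : ℕ} (α : mk k ⟶ mk n) : Fin k → ℕ :=
  fun i => (α.toOrderHom i.succ : ℕ) - (α.toOrderHom i.castSucc : ℕ)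

/-- The set `Act(k)` of active maps out of `[k]` (with arbitrary codomain). -/
def ActFrom (k : ℕ) : Type :=
  Σ n : ℕ, {α : mk k ⟶ mk n // IsActive α}

/-- The difference map `Act(k) → ℕ^k`. -/
def diffMap (k : ℕ) : ActFrom k → (Fin k → ℕ) := fun x => diff x.2.1

/-- The action of `φ : [k'] → [k]` on the `k`-simplices `ℕ^k` of the nerve of
`Bℕ`: the `i`-th entry of the result is the sum of the entries from `φ(i-1)`
to `φ(i) - 1`. -/
def nerveBNAct {k' k : ℕ} (φ : mk k' ⟶ mk k) (x : Fin k → ℕ) : Fin k' → ℕ :=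
  fun i => ∑ j ∈ Finset.Ico ((φ.toOrderHom i.castSucc : ℕ)) ((φ.toOrderHom i.succ : ℕ)),
    (fun t => if h : t < k then x ⟨t, h⟩ else 0) j

/-- The inert map `γᵢ : [nᵢ] → [n]`, `j ↦ α(i) + j` (where `nᵢ = α(i+1) - α(i)`),
appearing in the active-inert factorization of `α ∘ ρᵢ`. -/
def segIncl {k n : ℕ} (α : mk k ⟶ mk n) (i : Fin k) : mk (diff α i) ⟶ mk n :=
  mkHom ⟨fun j => ⟨(α.toOrderHom i.castSucc : ℕ) + (j : ℕ), by
      have hj : (j : ℕ) ≤ diff α i := by have := j.isLt; simp [len_mk] at this; omega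
      have hle : (α.toOrderHom i.castSucc : ℕ) ≤ (α.toOrderHom i.succ : ℕ) :=
        α.toOrderHom.monotone (Fin.castSucc_le_succ i)
      have := (α.toOrderHom i.succ).isLt
      simp only [diff] at hj
      simp [len_mk] at *
      omega⟩,
    fun a b h => by
      simp only [Fin.mk_le_mk]
      have : (a : ℕ) ≤ (b : ℕ) := h
      omega⟩

lemma isInert_segIncl {k n : ℕ} (α : mk k ⟶ mk n) (i : Fin k) :
    IsInert (segIncl α i) := by
  intro t
  show ((α.toOrderHom i.castSucc : ℕ) + (t.succ : ℕ)) =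
    ((α.toOrderHom i.castSucc : ℕ) + (t.castSucc : ℕ)) + 1
  simp
  omega

/-- `γᵢ` as a morphism of `Δ_inert`. -/
def segInclI {k n : ℕ} (α : mk k ⟶ mk n) (i : Fin k) : (⟨diff α i⟩ : InertCat) ⟶ ⟨n⟩ :=
  ⟨segIncl α i, isInert_segIncl α i⟩

/-- The Segal map of the free simplicial set `X = j_!(A)`: it sends the
`α`-summand `A_n` of `X_k` to the tuple of its restrictions along the `γᵢ`. -/
def fdSegalMap (A : InertCat ᵒᵖ ⥤ Type) (k : ℕ) : FD A k → (Fin k → FD A 1) :=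
  fun x i => ⟨diff x.2.1.1 i, ⟨mu (diff x.2.1.1 i), isActive_mu _⟩,
    A.map (segInclI x.2.1.1 i).op x.2.2⟩

/-- Matching (fiber product over `X_0`) condition for a tuple in `(X_1)^k`:
consecutive components agree in `A_0` under top/bottom vertex restrictions. -/
def fdMatching (A : InertCat ᵒᵖ ⥤ Type) (k : ℕ) (t : Fin k → FD A 1) : Prop :=
  ∀ (i : Fin k) (h : (i : ℕ) + 1 < k),
    A.map (topV (t i).1).op ((t i).2.2) =
      A.map (botV (t ⟨(i : ℕ) + 1, h⟩).1).op ((t ⟨(i : ℕ) + 1, h⟩).2.2)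

/-- The restriction map `A_n → ∏ᵢ A_{nᵢ}` along the covering family `{γᵢ}`
associated to an active map `α : [k] → [n]`. -/
def resMap (A : InertCat ᵒᵖ ⥤ Type) {k n : ℕ} (α : mk k ⟶ mk n) :
    A.obj (Opposite.op ⟨n⟩) → ∀ i : Fin k, A.obj (Opposite.op ⟨diff α i⟩) :=
  fun a i => A.map (segInclI α i).op a

/-- Matching (fiber product over `A_0`) condition for a tuple in `∏ᵢ A_{nᵢ}`. -/
def resMatching (A : InertCat ᵒᵖ ⥤ Type) {k n : ℕ} (α : mk k ⟶ mk n)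
    (t : ∀ i : Fin k, A.obj (Opposite.op ⟨diff α i⟩)) : Prop :=
  ∀ (i : Fin k) (h : (i : ℕ) + 1 < k),
    A.map (topV (diff α i)).op (t i) =
      A.map (botV (diff α ⟨(i : ℕ) + 1, h⟩)).op (t ⟨(i : ℕ) + 1, h⟩)

/-- The length functor from the path category of a quiver to `Bℕ`. -/
def lengthFunctor (Q : Type u) [Quiver.{u + 1} Q] : Paths Q ⥤ BN where
  obj _ := SingleObj.star _
  map p := Multiplicative.ofAdd p.length
  map_id _ := rfl
  map_comp {x y z} p q := by
    show Multiplicative.ofAdd (p.comp q).length = _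
    show _ = (Multiplicative.ofAdd q.length) * (Multiplicative.ofAdd p.length)
    rw [← ofAdd_add]
    exact congrArg Multiplicative.ofAdd ((Quiver.Path.length_comp p q).trans (Nat.add_comm _ _))

/-- A functor to `Bℕ` is CULF if every factorization in `(ℕ,+)` of the image of
a morphism `f` lifts uniquely to a factorization of `f`. -/
def IsCULF {C : Type u} [Category.{v} C] (F : C ⥤ BN) : Prop :=
  ∀ {x y : C} (f : x ⟶ y) (a b : Multiplicative ℕ), F.map f = a * b →
    ∃! p : Σ z : C, (x ⟶ z) × (z ⟶ y),
      p.2.1 ≫ p.2.2 = f ∧ F.map p.2.1 = a ∧ F.map p.2.2 = b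

/-- The category `𝕃` of finite linear orders `{1,…,n}` and convex monotone
injections. -/
structure LinOrdCat where
  n : ℕ

/-- A convex monotone injection between finite linear orders. -/
def IsConvexEmb {m n : ℕ} (f : Fin m → Fin n) : Prop :=
  StrictMono f ∧ ∀ (a b : Fin m) (c : Fin n), f a ≤ c → c ≤ f b → ∃ x, f x = c

instance : Category LinOrdCat where
  Hom x y := {f : Fin x.n → Fin y.n // IsConvexEmb f}
  id x := ⟨id, strictMono_id, fun _ _ c _ _ => ⟨c, rfl⟩⟩
  comp f g := ⟨g.1 ∘ f.1, (g.2.1).comp f.2.1, by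
    intro a b c h1 h2
    obtain ⟨w, hw⟩ := g.2.2 (f.1 a) (f.1 b) c h1 h2
    have ha : f.1 a ≤ w := by
      rw [← (g.2.1).le_iff_le]; rw [hw]; exact h1
    have hb : w ≤ f.1 b := by
      rw [← (g.2.1).le_iff_le]; rw [hw]; exact h2
    obtain ⟨v, hv⟩ := f.2.2 a b w ha hb
    exact ⟨v, by simp [Function.comp, hv, hw]⟩⟩
  id_comp f := by apply Subtype.ext; rfl
  comp_id f := by apply Subtype.ext; rfl
  assoc f g h := by apply Subtype.ext; rfl

/-! Every `f : [k] → [n]` factors as the active map with the same successive differences followed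
by the inert shift `j ↦ f 0 + j`. So every object of the comma category computing `j_!(1)_k` maps
to an active map, and active maps out of `[k]` are classified by their difference tuples in `ℕ^k`.
A tuple is realised as the `k`-simplex of `N(Bℕ)` with those arrows; the unit `1 → j^* N(Bℕ)`
picks the all-ones simplices, which inert maps preserve. -/

theorem _root_.Fin.monotone_partialSum {M : Type*} [AddMonoid M] [PartialOrder M]
    [CanonicallyOrderedAdd M] {n : ℕ} (f : Fin n → M) : Monotone (Fin.partialSum f) :=
  Fin.monotone_iff_le_succ.2 fun i => by rw [Fin.partialSum_succ]; exact le_self_add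

lemma _root_.CategoryTheory.Limits.Cocone.ι_app_eq_of_hom {J I C : Type*} [Category J]
    [Category I] [Category C] {G : J ⥤ I} {X : C}
    (s : Limits.Cocone (G ⋙ (Functor.const I).obj X)) {j j' : J} (φ : j ⟶ j') :
    s.ι.app j = s.ι.app j' := by
  simpa using (s.w φ).symm

def shiftHom {m n : ℕ} (a : ℕ) (h : a + m ≤ n) : mk m ⟶ mk n :=
  mkHom ⟨fun j => ⟨a + j, by have : (j : ℕ) ≤ m := Nat.lt_succ_iff.1 j.isLt; omega⟩,
    fun _ _ hij => Nat.add_le_add_left hij a⟩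

lemma isInert_shiftHom {m n : ℕ} (a : ℕ) (h : a + m ≤ n) : IsInert (shiftHom a h) := by
  intro i
  show a + (i.succ : ℕ) = a + (i.castSucc : ℕ) + 1
  simp only [Fin.val_succ, Fin.val_castSucc]
  omega

lemma diff_eq_one_of_isInert {k n : ℕ} {f : mk k ⟶ mk n} (hf : IsInert f) :
    diff f = fun _ => 1 := by
  funext i
  simp [diff, hf i]

lemma val_apply_eq_add_partialSum_diff {k n : ℕ} (f : mk k ⟶ mk n) (j : Fin (k + 1)) :
    (f.toOrderHom j : ℕ) = f.toOrderHom 0 + Fin.partialSum (diff f) j := by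
  induction j using Fin.induction with
  | zero => simp
  | succ i ih =>
    have hle : (f.toOrderHom i.castSucc : ℕ) ≤ f.toOrderHom i.succ :=
      f.toOrderHom.monotone (Fin.castSucc_le_succ i)
    rw [Fin.partialSum_succ, ← add_assoc, ← ih, diff]
    omega

lemma IsActive.val_apply_eq_partialSum_diff {k n : ℕ} {f : mk k ⟶ mk n} (hf : IsActive f)
    (j : Fin (k + 1)) : (f.toOrderHom j : ℕ) = Fin.partialSum (diff f) j := by
  rw [val_apply_eq_add_partialSum_diff, hf.1, Fin.val_zero, zero_add]

lemma IsActive.eq_partialSum_diff_last {k n : ℕ} {f : mk k ⟶ mk n} (hf : IsActive f) :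
    n = Fin.partialSum (diff f) (Fin.last k) := by
  simpa [hf.2] using hf.val_apply_eq_partialSum_diff (Fin.last k)

lemma IsActive.ext_of_diff_eq {k n : ℕ} {f g : mk k ⟶ mk n} (hf : IsActive f) (hg : IsActive g)
    (h : diff f = diff g) : f = g :=
  Hom.ext _ _ <| OrderHom.ext _ _ <| funext fun j => Fin.ext <| by
    rw [hf.val_apply_eq_partialSum_diff, hg.val_apply_eq_partialSum_diff, h]

def ofDiff {k : ℕ} (x : Fin k → ℕ) : mk k ⟶ mk (Fin.partialSum x (Fin.last k)) :=
  mkHom ⟨fun j =>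
      ⟨Fin.partialSum x j, Nat.lt_succ_of_le (Fin.monotone_partialSum x j.le_last)⟩,
    fun _ _ h => Fin.monotone_partialSum x h⟩

lemma ofDiff_apply {k : ℕ} (x : Fin k → ℕ) (j : Fin (k + 1)) :
    ((ofDiff x).toOrderHom j : ℕ) = Fin.partialSum x j := rfl

lemma isActive_ofDiff {k : ℕ} (x : Fin k → ℕ) : IsActive (ofDiff x) :=
  ⟨Fin.ext (Fin.partialSum_zero x), rfl⟩

lemma diff_ofDiff {k : ℕ} (x : Fin k → ℕ) : diff (ofDiff x) = x := by
  funext i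
  simp [diff, ofDiff_apply, Fin.partialSum_succ]

lemma diffMap_bijective (k : ℕ) : Function.Bijective (diffMap k) := by
  refine ⟨?_, fun x => ⟨⟨_, ofDiff x, isActive_ofDiff x⟩, diff_ofDiff x⟩⟩
  rintro ⟨n, f, hf⟩ ⟨n', g, hg⟩ (h : diff f = diff g)
  obtain rfl : n = n' := by rw [hf.eq_partialSum_diff_last, hg.eq_partialSum_diff_last, h]
  obtain rfl := hf.ext_of_diff_eq hg h
  rfl

lemma add_partialSum_diff_last_le {k n : ℕ} (f : mk k ⟶ mk n) :
    f.toOrderHom 0 + Fin.partialSum (diff f) (Fin.last k) ≤ n := by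
  rw [← val_apply_eq_add_partialSum_diff]
  exact Fin.is_le _

lemma ofDiff_diff_comp_shiftHom {k n : ℕ} (f : mk k ⟶ mk n) :
    ofDiff (diff f) ≫ shiftHom _ (add_partialSum_diff_last_le f) = f :=
  Hom.ext _ _ <| OrderHom.ext _ _ <| funext fun j => Fin.ext
    (val_apply_eq_add_partialSum_diff f j).symm

def diffSimplex {m n : ℕ} (f : mk m ⟶ mk n) : ComposableArrows BN m where
  obj _ := SingleObj.star _
  map {i j} _ := Multiplicative.ofAdd ((f.toOrderHom j : ℕ) - f.toOrderHom i)
  map_id i := by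
    show Multiplicative.ofAdd _ = (1 : Multiplicative ℕ)
    simp
  map_comp {i j l} u v := by
    have h1 : (f.toOrderHom i : ℕ) ≤ f.toOrderHom j := f.toOrderHom.monotone (leOfHom u)
    have h2 : (f.toOrderHom j : ℕ) ≤ f.toOrderHom l := f.toOrderHom.monotone (leOfHom v)
    show Multiplicative.ofAdd _ = Multiplicative.ofAdd _ * Multiplicative.ofAdd _
    rw [← ofAdd_add]
    congr 1
    omega

def edgeTuple {k : ℕ} (F : ComposableArrows BN k) (i : Fin k) : ℕ :=
  Multiplicative.toAdd (show Multiplicative ℕ from F.map (homOfLE i.castSucc_le_succ))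

lemma edgeTuple_diffSimplex {m n : ℕ} (f : mk m ⟶ mk n) :
    edgeTuple (diffSimplex f) = diff f :=
  rfl

lemma diffSimplex_ofDiff_edgeTuple {k : ℕ} (F : ComposableArrows BN k) :
    diffSimplex (ofDiff (edgeTuple F)) = F := by
  refine ComposableArrows.ext (fun _ => rfl) fun i hi => ?_
  simp only [eqToHom_refl, Category.comp_id, Category.id_comp]
  show Multiplicative.ofAdd (Fin.partialSum (edgeTuple F) (Fin.succ ⟨i, hi⟩) -
    Fin.partialSum (edgeTuple F) (Fin.castSucc ⟨i, hi⟩)) = _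
  rw [Fin.partialSum_succ, Nat.add_sub_cancel_left]
  rfl

lemma diffSimplex_eq_of_diff_eq {k n n' : ℕ} {f : mk k ⟶ mk n} {g : mk k ⟶ mk n'}
    (h : diff f = diff g) : diffSimplex f = diffSimplex g := by
  rw [← diffSimplex_ofDiff_edgeTuple (diffSimplex f),
    ← diffSimplex_ofDiff_edgeTuple (diffSimplex g), edgeTuple_diffSimplex,
    edgeTuple_diffSimplex, h]

lemma diffSimplex_eq_of_isInert {m n : ℕ} {f : mk m ⟶ mk n} (hf : IsInert f) :
    diffSimplex f = diffSimplex (𝟙 (mk m)) :=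
  diffSimplex_eq_of_diff_eq <| by
    rw [diff_eq_one_of_isInert hf, diff_eq_one_of_isInert (isInert_id _)]

def allOnesUnit : (Functor.const (InertCat ᵒᵖ)).obj PUnit ⟶ jF.op ⋙ nerve BN where
  app X := TypeCat.ofHom fun _ => diffSimplex (𝟙 (mk X.unop.n))
  naturality X Y h := by
    ext
    exact (diffSimplex_eq_of_isInert h.unop.2).symm

section Colimit

variable (Y : SimplexCategoryᵒᵖ)

def activeArrow (x : Fin Y.unop.len → ℕ) : CostructuredArrow jF.op Y :=
  CostructuredArrow.mk (Y := Opposite.op (⟨Fin.partialSum x (Fin.last _)⟩ : InertCat))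
    (ofDiff x).op

def toActiveArrow (g : CostructuredArrow jF.op Y) :
    g ⟶ activeArrow Y (diff (g.hom.unop : mk Y.unop.len ⟶ mk g.left.unop.n)) :=
  CostructuredArrow.homMk
    (Quiver.Hom.op (⟨_, isInert_shiftHom _ (add_partialSum_diff_last_le g.hom.unop)⟩ :
      (⟨_⟩ : InertCat) ⟶ g.left.unop))
    (congrArg Quiver.Hom.op (ofDiff_diff_comp_shiftHom g.hom.unop))

lemma coconeAt_ι_app_apply (g : CostructuredArrow jF.op Y) (u : PUnit) :
    ((Functor.LeftExtension.mk (nerve BN) allOnesUnit).coconeAt Y).ι.app g u =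
      diffSimplex (g.hom.unop : mk Y.unop.len ⟶ mk g.left.unop.n) :=
  rfl

def isPointwiseLeftKanExtensionAt :
    (Functor.LeftExtension.mk (nerve BN) allOnesUnit).IsPointwiseLeftKanExtensionAt Y where
  desc s := TypeCat.ofHom fun F => s.ι.app (activeArrow Y (edgeTuple F)) PUnit.unit
  fac s g := by
    ext u
    have h := s.ι_app_eq_of_hom (toActiveArrow Y g)
    exact (ConcreteCategory.congr_hom h u).symm
  uniq s m hm := by
    ext F
    have hF : ((Functor.LeftExtension.mk (nerve BN) allOnesUnit).coconeAt Y).ι.app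
        (activeArrow Y (edgeTuple F)) PUnit.unit = F := by
      rw [coconeAt_ι_app_apply]
      exact diffSimplex_ofDiff_edgeTuple F
    conv_lhs => rw [← hF]
    exact ConcreteCategory.congr_hom (hm _) _

end Colimit

/-- The left Kan extension along `j : Δ_inert → Δ` of the
terminal presheaf is the nerve of `Bℕ`; in particular `j_!(1)_k ≅ ℕ^k` via
successive differences. -/
theorem lan_terminal_iso_nerve_BN :
    Nonempty (((jF.op).lan).obj ((Functor.const (InertCat ᵒᵖ)).obj PUnit) ≅ nerve BN) ∧
    (∀ k : ℕ, Function.Bijective (diffMap k)) := by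
  have : (nerve BN).IsLeftKanExtension allOnesUnit :=
    Functor.LeftExtension.IsPointwiseLeftKanExtension.isLeftKanExtension
      (E := .mk _ allOnesUnit) isPointwiseLeftKanExtensionAt
  exact ⟨⟨Functor.leftKanExtensionUnique _ (jF.op.lanUnit.app _) _ allOnesUnit⟩,
    diffMap_bijective⟩

end FreeDecompPaper
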